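/- Let G have conductance Φ_G and let T be an HC tree with dense branch (A_0, ..., A_k). Then cost_G(T) ≥ (Φ_G/2) · |A_k| · vol(A_k). -/

import Mathlib

open Finset

/-- A hierarchical clustering (HC) tree: a binary tree with vertex-labelled leaves. -/
inductive HCTree (V : Type) where
  | leaf (v : V) : HCTree V
  | node (l r : HCTree V) : HCTree V

namespace HCTree

variable {V : Type} [Fintype V] [DecidableEq V]

/-- The list of leaf labels of an HC tree. -/
def leafList : HCTree V → List V
  | leaf v => [v]
  | node l r => leafList l ++ leafList r

/-- The set of leaves of an HC tree. -/
def leaves (t : HCTree V) : Finset V := t.leafList.toFinset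

/-- Total weight of (ordered) pairs between two vertex sets:
`w(S,T) = ∑_{u ∈ S, v ∈ T} w(u,v)`. -/
def cut (w : V → V → ℝ) (S T : Finset V) : ℝ := ∑ u ∈ S, ∑ v ∈ T, w u v

/-- The (weighted) degree of a vertex: `d_u = ∑_v w(u,v)`. -/
def deg (w : V → V → ℝ) (u : V) : ℝ := ∑ v, w u v

/-- The volume of a vertex set: `vol(S) = ∑_{u ∈ S} d_u`. -/
def vol (w : V → V → ℝ) (S : Finset V) : ℝ := ∑ u ∈ S, deg w u

/-- Dasgupta's cost of an HC tree, via the equivalent internal-node formula: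
`cost(T) = ∑_{N → (N₁,N₂)} |leaves(T[N])| · w(leaves(N₁), leaves(N₂))`. -/
def cost (w : V → V → ℝ) : HCTree V → ℝ
  | leaf _ => 0
  | node l r =>
      ((leaves (node l r)).card : ℝ) * cut w (leaves l) (leaves r)
        + cost w l + cost w r

/-- `t` is an HC tree of the graph on vertex set `V`: its leaves are distinct
and are exactly the vertices of `V`. -/
def isHC (t : HCTree V) : Prop := t.leafList.Nodup ∧ t.leaves = Finset.univ

end HCTree

namespace HCTree

variable {V : Type} [Fintype V] [DecidableEq V]

/-- `DenseBranch w t k A B` says that `(A 0, …, A k)` is the dense branch of the HC tree `t`,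
with `B (i+1)` the sibling of `A (i+1)`: `A 0` is the root, each `A (i+1)` is the child of
`A i` of higher volume, every node on the branch has volume greater than `vol(G)/2`,
and both children of the final node `A k` have volume at most `vol(G)/2`. -/
def DenseBranch (w : V → V → ℝ) (t : HCTree V) (k : ℕ)
    (A B : ℕ → HCTree V) : Prop :=
  A 0 = t ∧
  (∀ i < k,
      (A i = HCTree.node (A (i+1)) (B (i+1)) ∨ A i = HCTree.node (B (i+1)) (A (i+1))) ∧
      vol w (leaves (B (i+1))) ≤ vol w (leaves (A (i+1)))) ∧
  (∀ i ≤ k, vol w (Finset.univ : Finset V) / 2 < vol w (leaves (A i))) ∧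
  (∃ l r, A k = HCTree.node l r ∧
      vol w (leaves l) ≤ vol w (Finset.univ : Finset V) / 2 ∧
      vol w (leaves r) ≤ vol w (Finset.univ : Finset V) / 2)

end HCTree

/-!
Let `A_k = node l r` and let `S` be the leaves of its heavier child, so `vol S ≤ vol(G)/2` and
`vol(A_k) ≤ 2 vol S`. Every edge leaving `S` is split at `A_k` or at one of its ancestors, and
each such node has at least `|A_k|` leaves, so `cost(T) ≥ |A_k| · w(S, Sᶜ) ≥ |A_k| · Φ · vol S`.
-/

namespace HCTree

variable {V : Type}

section Cut

variable (w : V → V → ℝ)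

theorem cut_nonneg (hw : ∀ u v, 0 ≤ w u v) (S T : Finset V) : 0 ≤ cut w S T :=
  sum_nonneg fun _ _ => sum_nonneg fun _ _ => hw _ _

theorem cut_comm (hsymm : ∀ u v, w u v = w v u) (S T : Finset V) :
    cut w S T = cut w T S := by
  rw [cut, cut, sum_comm]
  exact sum_congr rfl fun _ _ => sum_congr rfl fun _ _ => hsymm _ _

variable {w}

theorem cut_mono_right (hw : ∀ u v, 0 ≤ w u v) (S : Finset V) {T T' : Finset V}
    (h : T ⊆ T') : cut w S T ≤ cut w S T' :=
  sum_le_sum fun _ _ => sum_le_sum_of_subset_of_nonneg h fun _ _ _ => hw _ _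

theorem cut_mono_left (hw : ∀ u v, 0 ≤ w u v) {S S' : Finset V} (h : S ⊆ S')
    (T : Finset V) : cut w S T ≤ cut w S' T :=
  sum_le_sum_of_subset_of_nonneg h fun _ _ _ => sum_nonneg fun _ _ => hw _ _

theorem cut_le_add_of_subset_union [DecidableEq V] (hw : ∀ u v, 0 ≤ w u v)
    (S : Finset V) {T T₁ T₂ : Finset V} (h : T ⊆ T₁ ∪ T₂) :
    cut w S T ≤ cut w S T₁ + cut w S T₂ := by
  rw [cut, cut, cut, ← sum_add_distrib]
  refine sum_le_sum fun u _ => ?_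
  calc ∑ v ∈ T, w u v
      ≤ ∑ v ∈ T₁ ∪ T₂, w u v := sum_le_sum_of_subset_of_nonneg h fun _ _ _ => hw _ _
    _ ≤ ∑ v ∈ T₁ ∪ T₂, w u v + ∑ v ∈ T₁ ∩ T₂, w u v :=
        le_add_of_nonneg_right (sum_nonneg fun _ _ => hw _ _)
    _ = ∑ v ∈ T₁, w u v + ∑ v ∈ T₂, w u v := sum_union_inter

end Cut

theorem vol_union_le [Fintype V] [DecidableEq V] {w : V → V → ℝ} (hw : ∀ u v, 0 ≤ w u v)
    (S T : Finset V) : vol w (S ∪ T) ≤ vol w S + vol w T := by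
  rw [vol, vol, vol, ← sum_union_inter]
  exact le_add_of_nonneg_right (sum_nonneg fun _ _ => sum_nonneg fun _ _ => hw _ _)

variable [DecidableEq V]

@[simp]
theorem leaves_leaf (v : V) : leaves (leaf v) = {v} := by
  simp [leaves, leafList]

@[simp]
theorem leaves_node (l r : HCTree V) : leaves (node l r) = leaves l ∪ leaves r := by
  simp [leaves, leafList]

theorem leaves_nonempty : ∀ t : HCTree V, (leaves t).Nonempty
  | leaf v => by simp
  | node l _ => by simpa using Or.inl (leaves_nonempty l)

theorem cost_nonneg {w : V → V → ℝ} (hw : ∀ u v, 0 ≤ w u v) :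
    ∀ t : HCTree V, 0 ≤ cost w t
  | leaf _ => le_rfl
  | node l r => by
    have := cut_nonneg w hw (leaves l) (leaves r)
    have := cost_nonneg hw l
    have := cost_nonneg hw r
    rw [cost]
    positivity

theorem card_mul_cut_child_le_cost {w : V → V → ℝ} (hw : ∀ u v, 0 ≤ w u v)
    (hsymm : ∀ u v, w u v = w v u) {l r : HCTree V}
    {S : Finset V} (hS : S = leaves l ∨ S = leaves r) :
    ((leaves (node l r)).card : ℝ) * cut w S (leaves (node l r) \ S) ≤ cost w (node l r) := by
  have hcut : cut w S (leaves (node l r) \ S) ≤ cut w (leaves l) (leaves r) := by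
    rcases hS with rfl | rfl
    · exact cut_mono_right hw _ (by simp [union_sdiff_left])
    · rw [cut_comm w hsymm (leaves l)]
      exact cut_mono_right hw _ (by simp [union_sdiff_right])
  have := cost_nonneg hw l
  have := cost_nonneg hw r
  rw [cost]
  nlinarith [mul_le_mul_of_nonneg_left hcut (Nat.cast_nonneg (leaves (node l r)).card)]

inductive IsSubtree (a : HCTree V) : HCTree V → Prop
  | refl : IsSubtree a a
  | left {l : HCTree V} (r : HCTree V) : IsSubtree a l → IsSubtree a (node l r)
  | right (l : HCTree V) {r : HCTree V} : IsSubtree a r → IsSubtree a (node l r)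

theorem IsSubtree.leaves_subset {a t : HCTree V} (h : IsSubtree a t) : leaves a ⊆ leaves t := by
  induction h with
  | refl => exact Subset.rfl
  | left r _ ih => exact ih.trans (by simp)
  | right l _ ih => exact ih.trans (by simp)

theorem card_mul_cut_add_cost_le_of_child {w : V → V → ℝ} (hw : ∀ u v, 0 ≤ w u v)
    {a c s p : HCTree V} (hp : leaves p = leaves c ∪ leaves s)
    (hcost : cost w p =
      ((leaves p).card : ℝ) * cut w (leaves c) (leaves s) + cost w c + cost w s)
    (hac : leaves a ⊆ leaves c) {S : Finset V} (hS : S ⊆ leaves a)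
    (ih : ((leaves a).card : ℝ) * cut w S (leaves c \ leaves a) + cost w a ≤ cost w c) :
    ((leaves a).card : ℝ) * cut w S (leaves p \ leaves a) + cost w a ≤ cost w p := by
  have hsplit :
      cut w S (leaves p \ leaves a) ≤ cut w S (leaves c \ leaves a) + cut w S (leaves s) :=
    cut_le_add_of_subset_union hw S (by rw [hp, union_sdiff_distrib]; gcongr; exact sdiff_subset)
  have hcross : cut w S (leaves s) ≤ cut w (leaves c) (leaves s) :=
    cut_mono_left hw (hS.trans hac) _
  have hcard : ((leaves a).card : ℝ) ≤ (leaves p).card := by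
    exact_mod_cast card_le_card (hp ▸ hac.trans subset_union_left)
  have hcut_nonneg := cut_nonneg w hw S (leaves s)
  have hs_cost := cost_nonneg hw s
  calc ((leaves a).card : ℝ) * cut w S (leaves p \ leaves a) + cost w a
      ≤ ((leaves a).card : ℝ) * cut w S (leaves c \ leaves a) + cost w a
          + (leaves p).card * cut w (leaves c) (leaves s) := by
        nlinarith [mul_le_mul_of_nonneg_left hsplit (Nat.cast_nonneg (leaves a).card),
          mul_le_mul hcard hcross hcut_nonneg (Nat.cast_nonneg _)]
    _ ≤ cost w p := by linarith

/-- Edges from `S ⊆ leaves a` to the rest of `t` are split strictly above `a`, at nodes with at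
least `|leaves a|` leaves. -/
theorem IsSubtree.card_mul_cut_add_cost_le {w : V → V → ℝ} (hw : ∀ u v, 0 ≤ w u v)
    (hsymm : ∀ u v, w u v = w v u) {a t : HCTree V} (h : IsSubtree a t) {S : Finset V}
    (hS : S ⊆ leaves a) :
    ((leaves a).card : ℝ) * cut w S (leaves t \ leaves a) + cost w a ≤ cost w t := by
  induction h with
  | refl => simp [cut]
  | @left l r hal ih =>
    exact card_mul_cut_add_cost_le_of_child hw (leaves_node l r) (by rw [cost])
      hal.leaves_subset hS ih
  | @right l r har ih =>
    refine card_mul_cut_add_cost_le_of_child hw (s := l) (by rw [leaves_node, union_comm]) ?_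
      har.leaves_subset hS ih
    rw [cost, cut_comm w hsymm (leaves r)]
    ring

theorem IsSubtree.card_mul_cut_compl_le_cost [Fintype V] {w : V → V → ℝ}
    (hw : ∀ u v, 0 ≤ w u v) (hsymm : ∀ u v, w u v = w v u) {l r t : HCTree V}
    (h : IsSubtree (node l r) t) (ht : leaves t = univ) {S : Finset V}
    (hS : S = leaves l ∨ S = leaves r) :
    ((leaves (node l r)).card : ℝ) * cut w S Sᶜ ≤ cost w t := by
  have hSa : S ⊆ leaves (node l r) := by rcases hS with rfl | rfl <;> simp
  have hsplit : cut w S Sᶜ ≤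
      cut w S (leaves t \ leaves (node l r)) + cut w S (leaves (node l r) \ S) :=
    cut_le_add_of_subset_union hw S fun v hv => by
      by_cases hva : v ∈ leaves (node l r) <;> simp_all
  have hbelow := card_mul_cut_child_le_cost hw hsymm hS
  have habove := h.card_mul_cut_add_cost_le hw hsymm hSa
  nlinarith [mul_le_mul_of_nonneg_left hsplit (Nat.cast_nonneg (leaves (node l r)).card)]

theorem DenseBranch.isSubtree [Fintype V] {w : V → V → ℝ} {t : HCTree V} {k : ℕ}
    {A B : ℕ → HCTree V} (hdb : DenseBranch w t k A B) : IsSubtree (A k) t := by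
  obtain ⟨rfl, hstep, -⟩ := hdb
  suffices ∀ d i, i + d = k → IsSubtree (A k) (A i) from this k 0 (zero_add k)
  intro d
  induction d with
  | zero => rintro i rfl; exact .refl
  | succ d ih =>
    intro i hi
    rcases (hstep i (by omega)).1 with h | h <;> rw [h]
    · exact .left _ (ih (i + 1) (by omega))
    · exact .right _ (ih (i + 1) (by omega))

end HCTree

open HCTree in
/-- If `G` has conductance `Φ_G` and `T` is an HC tree with dense branch
`(A_0, …, A_k)`, then `cost_G(T) ≥ (Φ_G/2) · |A_k| · vol(A_k)`. -/
theorem cost_lower_bound_last_dense_node {V : Type} [Fintype V] [DecidableEq V]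
    (w : V → V → ℝ) (hw : ∀ u v, 0 ≤ w u v) (hsymm : ∀ u v, w u v = w v u)
    (Φ : ℝ) (hΦ0 : 0 ≤ Φ)
    (hΦ : ∀ S : Finset V, S.Nonempty → vol w S ≤ vol w (Finset.univ : Finset V) / 2 →
      Φ * vol w S ≤ cut w S Sᶜ)
    (t : HCTree V) (ht : isHC t) (k : ℕ) (A B : ℕ → HCTree V)
    (hdb : DenseBranch w t k A B) :
    Φ / 2 * ((leaves (A k)).card : ℝ) * vol w (leaves (A k)) ≤ cost w t := by
  have hsub := hdb.isSubtree
  obtain ⟨-, -, -, l, r, hAk, hl, hr⟩ := hdb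
  rw [hAk] at hsub ⊢
  obtain ⟨S, hS, hShalf, hSheavy⟩ : ∃ S, (S = leaves l ∨ S = leaves r) ∧
      vol w S ≤ vol w univ / 2 ∧ vol w (leaves (node l r)) ≤ 2 * vol w S := by
    have := vol_union_le hw (leaves l) (leaves r)
    rcases le_total (vol w (leaves l)) (vol w (leaves r)) with h | h
    · exact ⟨_, .inr rfl, hr, by simp only [leaves_node]; linarith⟩
    · exact ⟨_, .inl rfl, hl, by simp only [leaves_node]; linarith⟩
  have hSne : S.Nonempty := by rcases hS with rfl | rfl <;> exact leaves_nonempty _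
  calc Φ / 2 * ((leaves (node l r)).card : ℝ) * vol w (leaves (node l r))
      = (leaves (node l r)).card * (Φ / 2 * vol w (leaves (node l r))) := by ring
    _ ≤ (leaves (node l r)).card * (Φ * vol w S) :=
        mul_le_mul_of_nonneg_left (by linarith [mul_le_mul_of_nonneg_left hSheavy hΦ0])
          (Nat.cast_nonneg _)
    _ ≤ (leaves (node l r)).card * cut w S Sᶜ := by gcongr; exact hΦ S hSne hShalf
    _ ≤ cost w t := hsub.card_mul_cut_compl_le_cost hw hsymm ht.2 hS
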